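/- Under the same setting, the Doob martingale Y_i = E[CF_n(s) | X₀,…,X_{i-1}] satisfies E[(Y_i − Y_{i-1})² | F_{i-1}] ≤ 2/n almost surely for every i ∈ {1,…,n}. -/

import Mathlib

/-!
Put `k = i - 1` and let `W` be the crest factor of the signal whose `k`-th symbol is replaced
by `0`. As every symbol has modulus one, `|CF_n(s) - W| ≤ 1/√n`. Moreover `W` is a function of
the symbols other than `X_k`, which are independent of `X_k`, so `E[W | F_{k+1}] = E[W | F_k]`.
Hence `Y_{k+1} - Y_k = E[D | F_{k+1}] - E[D | F_k]` with `D = CF_n(s) - W` bounded by `1/√n`,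
and the conditional variance of `E[D | F_{k+1}]` given `F_k` is at most `1/n ≤ 2/n`.
-/

open MeasureTheory Finset

noncomputable def ofdm (n : ℕ) (T : ℝ) (x : Fin n → ℂ) (t : ℝ) : ℂ :=
  ((Real.sqrt n : ℝ) : ℂ)⁻¹ *
    ∑ i : Fin n, x i * Complex.exp (Complex.I * ((2 * Real.pi * (i : ℕ) * t / T : ℝ) : ℂ))

noncomputable def crest (n : ℕ) (T : ℝ) (x : Fin n → ℂ) : ℝ :=
  sSup ((fun t => ‖ofdm n T x t‖) '' Set.Icc (0 : ℝ) T)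

/-- The uniform distribution on the M-ary PSK constellation. -/
noncomputable def pskMeasure (M : ℕ) : Measure ℂ :=
  (M : ENNReal)⁻¹ •
    ∑ l ∈ Finset.range M,
      Measure.dirac (Complex.exp (Complex.I * (((2 * l + 1) * Real.pi / M : ℝ) : ℂ)))

namespace MeasureTheory

open ProbabilityTheory

variable {Ω E : Type*} [NormedAddCommGroup E] [NormedSpace ℝ E] [CompleteSpace E]
  {m₀ m₁ mG mH : MeasurableSpace Ω} {μ : Measure[m₀] Ω} [IsFiniteMeasure μ]

theorem setIntegral_inter_eq_smul_of_indep (hm₁ : m₁ ≤ m₀) (hH : mH ≤ m₀)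
    (hindep : Indep m₁ mH μ) {f : Ω → E} (hf : StronglyMeasurable[m₁] f) (hfi : Integrable f μ)
    {s t : Set Ω} (hs : MeasurableSet[m₁] s) (ht : MeasurableSet[mH] t) :
    ∫ ω in s ∩ t, f ω ∂μ = μ.real t • ∫ ω in s, f ω ∂μ := by
  have hfs : Integrable (s.indicator f) μ := hfi.indicator (hm₁ _ hs)
  calc ∫ ω in s ∩ t, f ω ∂μ = ∫ ω in t, s.indicator f ω ∂μ := by
        rw [setIntegral_indicator (hm₁ _ hs), Set.inter_comm]
    _ = ∫ ω in t, (μ[s.indicator f | mH]) ω ∂μ := (setIntegral_condExp hH hfs ht).symm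
    _ = ∫ ω in t, (∫ ω', s.indicator f ω' ∂μ) ∂μ :=
        setIntegral_congr_ae (hH _ ht) <| (condExp_indep_eq hm₁ hH (hf.indicator hs)
          hindep).mono fun _ h _ => h
    _ = μ.real t • ∫ ω in s, f ω ∂μ := by rw [setIntegral_const, integral_indicator (hm₁ _ hs)]

theorem sup_eq_generateFrom_image2_inter (m m' : MeasurableSpace Ω) :
    m ⊔ m' = MeasurableSpace.generateFrom
      (Set.image2 (· ∩ ·) {s | MeasurableSet[m] s} {t | MeasurableSet[m'] t}) := by
  refine le_antisymm (sup_le (fun s hs => ?_) (fun t ht => ?_))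
    (MeasurableSpace.generateFrom_le ?_)
  · exact MeasurableSpace.measurableSet_generateFrom ⟨s, hs, Set.univ, .univ, Set.inter_univ s⟩
  · exact MeasurableSpace.measurableSet_generateFrom ⟨Set.univ, .univ, t, ht, Set.univ_inter t⟩
  · rintro _ ⟨s, hs, t, ht, rfl⟩
    exact (le_sup_left (b := m') _ hs).inter (le_sup_right (a := m) _ ht)

theorem isPiSystem_image2_inter (m m' : MeasurableSpace Ω) :
    IsPiSystem (Set.image2 (· ∩ ·) {s | MeasurableSet[m] s} {t | MeasurableSet[m'] t}) := by
  rintro _ ⟨s, hs, t, ht, rfl⟩ _ ⟨s', hs', t', ht', rfl⟩ -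
  exact ⟨s ∩ s', hs.inter hs', t ∩ t', ht.inter ht', Set.inter_inter_inter_comm s s' t t'⟩

theorem condExp_sup_of_indep (hm₁ : m₁ ≤ m₀) (hG : mG ≤ m₁) (hH : mH ≤ m₀)
    (hindep : Indep m₁ mH μ) {f : Ω → E} (hf : StronglyMeasurable[m₁] f) :
    μ[f | mG ⊔ mH] =ᵐ[μ] μ[f | mG] := by
  by_cases hfi : Integrable f μ
  swap; · simp only [condExp_of_not_integrable hfi]; rfl
  have hGH : mG ⊔ mH ≤ m₀ := sup_le (hG.trans hm₁) hH
  have hc : StronglyMeasurable[m₁] (μ[f | mG]) := stronglyMeasurable_condExp.mono hG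
  refine (ae_eq_condExp_of_forall_setIntegral_eq hGH hfi
    (fun _ _ _ => integrable_condExp.integrableOn) (fun u hu _ => ?_)
    (stronglyMeasurable_condExp.mono le_sup_left).aestronglyMeasurable).symm
  refine MeasurableSpace.induction_on_inter (sup_eq_generateFrom_image2_inter mG mH)
    (isPiSystem_image2_inter mG mH) (by simp) ?_ ?_ ?_ u hu
  · rintro _ ⟨s, hs, t, ht, rfl⟩
    rw [setIntegral_inter_eq_smul_of_indep hm₁ hH hindep hc integrable_condExp (hG _ hs) ht,
      setIntegral_inter_eq_smul_of_indep hm₁ hH hindep hf hfi (hG _ hs) ht,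
      setIntegral_condExp (hG.trans hm₁) hfi hs]
  · intro t ht h
    rw [setIntegral_compl (hGH _ ht) integrable_condExp, setIntegral_compl (hGH _ ht) hfi, h,
      integral_condExp (hG.trans hm₁)]
  · intro s hdisj hs h
    rw [integral_iUnion (fun i => hGH _ (hs i)) hdisj integrable_condExp.integrableOn,
      integral_iUnion (fun i => hGH _ (hs i)) hdisj hfi.integrableOn]
    exact tsum_congr h

theorem condExp_sub_condExp_sq_le {mF : MeasurableSpace Ω} (hGF : mG ≤ mF) (hF : mF ≤ m₀)
    {f : Ω → ℝ} {r : ℝ} (hf : ∀ᵐ ω ∂μ, |f ω| ≤ r) :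
    ∀ᵐ ω ∂μ, (μ[fun ω' => ((μ[f | mF]) ω' - (μ[f | mG]) ω') ^ 2 | mG]) ω ≤ r ^ 2 := by
  have hA : ∀ᵐ ω ∂μ, |(μ[f | mF]) ω| ≤ r := ae_bdd_abs_condExp_of_ae_bdd_abs hf
  have hA2 : ∀ᵐ ω ∂μ, |(μ[f | mF] ^ 2) ω| ≤ r ^ 2 := by
    filter_upwards [hA] with ω h
    simpa [abs_pow] using pow_le_pow_left₀ (abs_nonneg _) h 2
  have hAmem : MemLp (μ[f | mF]) 2 μ :=
    .of_bound (stronglyMeasurable_condExp.mono hF).aestronglyMeasurable r <| by simpa using hA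
  have hvar : μ[fun ω' => ((μ[f | mF]) ω' - (μ[f | mG]) ω') ^ 2 | mG] =ᵐ[μ]
      Var[μ[f | mF]; μ | mG] :=
    condExp_congr_ae <| by
      filter_upwards [condExp_condExp_of_le (μ := μ) (f := f) hGF hF] with ω h
      simp only [Pi.pow_apply, Pi.sub_apply, h]
  filter_upwards [hvar, condVar_ae_le_condExp_sq (hGF.trans hF) hAmem,
    ae_bdd_abs_condExp_of_ae_bdd_abs (m := mG) hA2] with ω h₁ h₂ h₃
  rw [h₁]
  exact h₂.trans (le_of_abs_le h₃)

theorem condExp_sup_sub_condExp_sq_le (hm₁ : m₁ ≤ m₀) (hG : mG ≤ m₁) (hH : mH ≤ m₀)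
    (hindep : Indep m₁ mH μ) {Z W : Ω → ℝ} (hZ : Integrable Z μ) (hW : StronglyMeasurable[m₁] W)
    {r : ℝ} (hZW : ∀ᵐ ω ∂μ, |Z ω - W ω| ≤ r) :
    ∀ᵐ ω ∂μ, (μ[fun ω' => ((μ[Z | mG ⊔ mH]) ω' - (μ[Z | mG]) ω') ^ 2 | mG]) ω ≤ r ^ 2 := by
  have hZWi : Integrable (Z - W) μ :=
    .of_bound (hZ.aestronglyMeasurable.sub (hW.mono hm₁).aestronglyMeasurable) r hZW
  have hWi : Integrable W μ := by simpa using hZ.sub hZWi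
  have hincr : μ[fun ω' => ((μ[Z | mG ⊔ mH]) ω' - (μ[Z | mG]) ω') ^ 2 | mG] =ᵐ[μ]
      μ[fun ω' => ((μ[Z - W | mG ⊔ mH]) ω' - (μ[Z - W | mG]) ω') ^ 2 | mG] :=
    condExp_congr_ae <| by
      filter_upwards [condExp_sub (m := mG ⊔ mH) hZ hWi, condExp_sub (m := mG) hZ hWi,
        condExp_sup_of_indep hm₁ hG hH hindep hW] with ω h₁ h₂ h₃
      simp only [h₁, h₂, Pi.sub_apply, h₃]
      ring
  filter_upwards [hincr, condExp_sub_condExp_sq_le (f := Z - W) le_sup_left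
    (sup_le (hG.trans hm₁) hH) hZW] with ω h₁ h₂
  rw [h₁]
  exact h₂

end MeasureTheory

theorem ProbabilityTheory.indep_biSup_compl_singleton {Ω ι : Type*} {mΩ : MeasurableSpace Ω}
    {μ : Measure Ω} {m : ι → MeasurableSpace Ω} (h_le : ∀ i, m i ≤ mΩ) (h_indep : iIndep m μ)
    (k : ι) : Indep (⨆ j ∈ ({k}ᶜ : Set ι), m j) (m k) μ := by
  simpa using indep_iSup_of_disjoint h_le h_indep (disjoint_compl_left (a := ({k} : Set ι)))

theorem ae_norm_eq_one_pskMeasure (M : ℕ) : ∀ᵐ v ∂pskMeasure M, ‖v‖ = 1 := by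
  refine Measure.ae_smul_measure (ae_finsetSum_measure_iff.2 fun l _ => ?_) _
  rw [ae_dirac_iff (measurableSet_eq_fun measurable_norm measurable_const)]
  exact Complex.norm_exp_I_mul_ofReal _

section Crest

variable {n : ℕ} {T : ℝ}

theorem ofdm_sub (x y : Fin n → ℂ) (t : ℝ) :
    ofdm n T x t - ofdm n T y t = ofdm n T (x - y) t := by
  simp only [ofdm, ← mul_sub, ← sum_sub_distrib, Pi.sub_apply, sub_mul]

theorem norm_ofdm_le (x : Fin n → ℂ) (t : ℝ) :
    ‖ofdm n T x t‖ ≤ (Real.sqrt n)⁻¹ * ∑ j, ‖x j‖ := by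
  rw [ofdm, norm_mul, norm_inv, Complex.norm_real, Real.norm_of_nonneg (Real.sqrt_nonneg _)]
  gcongr
  refine (norm_sum_le _ _).trans_eq (sum_congr rfl fun j _ => ?_)
  rw [norm_mul, Complex.norm_exp_I_mul_ofReal, mul_one]

theorem bddAbove_norm_ofdm_image (x : Fin n → ℂ) :
    BddAbove ((fun t => ‖ofdm n T x t‖) '' Set.Icc (0 : ℝ) T) :=
  (isCompact_Icc.image (by unfold ofdm; fun_prop)).bddAbove

theorem crest_nonneg (x : Fin n → ℂ) : 0 ≤ crest n T x :=
  Real.sSup_nonneg <| by rintro _ ⟨t, -, rfl⟩; positivity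

theorem crest_le (x : Fin n → ℂ) : crest n T x ≤ (Real.sqrt n)⁻¹ * ∑ j, ‖x j‖ :=
  Real.sSup_le (by rintro _ ⟨t, -, rfl⟩; exact norm_ofdm_le x t) (by positivity)

theorem crest_le_crest_add (x y : Fin n → ℂ) :
    crest n T x ≤ crest n T y + (Real.sqrt n)⁻¹ * ∑ j, ‖x j - y j‖ := by
  refine Real.sSup_le ?_ (add_nonneg (crest_nonneg y) (by positivity))
  rintro _ ⟨t, ht, rfl⟩
  calc ‖ofdm n T x t‖ ≤ ‖ofdm n T y t‖ + ‖ofdm n T x t - ofdm n T y t‖ := norm_le_insert' _ _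
    _ ≤ crest n T y + (Real.sqrt n)⁻¹ * ∑ j, ‖x j - y j‖ := by
      rw [ofdm_sub]
      exact add_le_add (le_csSup (bddAbove_norm_ofdm_image y) ⟨t, ht, rfl⟩) (norm_ofdm_le _ t)

theorem abs_crest_sub_crest_le (x y : Fin n → ℂ) :
    |crest n T x - crest n T y| ≤ (Real.sqrt n)⁻¹ * ∑ j, ‖x j - y j‖ := by
  have hyx := crest_le_crest_add (T := T) y x
  simp only [norm_sub_rev (y _)] at hyx
  exact abs_sub_le_iff.2 ⟨by linarith [crest_le_crest_add (T := T) x y], by linarith⟩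

theorem lipschitzWith_crest : LipschitzWith (NNReal.sqrt n) (crest n T) := by
  refine .of_dist_le_mul fun x y => ?_
  calc dist (crest n T x) (crest n T y) ≤ (Real.sqrt n)⁻¹ * ∑ j, ‖x j - y j‖ :=
        abs_crest_sub_crest_le x y
    _ ≤ (Real.sqrt n)⁻¹ * ∑ _j : Fin n, dist x y := by
        gcongr with j
        exact (dist_eq_norm (x j) (y j)).symm.trans_le (dist_le_pi_dist x y j)
    _ = NNReal.sqrt n * dist x y := by
        rw [sum_const, card_univ, Fintype.card_fin, nsmul_eq_mul, ← mul_assoc, inv_mul_eq_div,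
          Real.div_sqrt, Real.coe_sqrt, NNReal.coe_natCast]

theorem crest_le_sqrt {x : Fin n → ℂ} (hx : ∀ j, ‖x j‖ ≤ 1) : crest n T x ≤ Real.sqrt n :=
  calc crest n T x ≤ (Real.sqrt n)⁻¹ * ∑ _j : Fin n, 1 := (crest_le x).trans (by gcongr; exact hx _)
    _ = Real.sqrt n := by
      rw [sum_const, card_univ, Fintype.card_fin, nsmul_one, inv_mul_eq_div, Real.div_sqrt]

theorem abs_crest_sub_crest_update_le (x : Fin n → ℂ) (k : Fin n) :
    |crest n T x - crest n T (Function.update x k 0)| ≤ (Real.sqrt n)⁻¹ * ‖x k‖ := by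
  refine (abs_crest_sub_crest_le _ _).trans_eq ?_
  rw [sum_eq_single k (fun j _ hj => by simp [hj]) (by simp)]
  simp

theorem integrable_crest_comp {Ω : Type*} [MeasurableSpace Ω] {μ : Measure Ω} [IsFiniteMeasure μ]
    {g : Ω → Fin n → ℂ} (hg : Measurable g) (hg₁ : ∀ᵐ ω ∂μ, ∀ j, ‖g ω j‖ ≤ 1) :
    Integrable (fun ω => crest n T (g ω)) μ :=
  .of_bound (lipschitzWith_crest.continuous.measurable.comp hg).aestronglyMeasurable _ <|
    hg₁.mono fun ω h => by rw [Real.norm_of_nonneg (crest_nonneg _)]; exact crest_le_sqrt h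

end Crest

theorem iSup_lt_succ_eq_sup {α : Type*} [CompleteLattice α] {n : ℕ} (m : Fin n → α) (k : Fin n) :
    ⨆ j : Fin n, ⨆ _ : (j : ℕ) < k + 1, m j = (⨆ j : Fin n, ⨆ _ : (j : ℕ) < k, m j) ⊔ m k := by
  simp_rw [Nat.lt_succ_iff_lt_or_eq, iSup_or, iSup_sup_eq, Fin.val_inj, iSup_iSup_eq_left]

theorem iSup_lt_le_biSup_compl {α : Type*} [CompleteLattice α] {n : ℕ} (m : Fin n → α)
    (k : Fin n) : ⨆ j : Fin n, ⨆ _ : (j : ℕ) < k, m j ≤ ⨆ j ∈ ({k}ᶜ : Set (Fin n)), m j :=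
  iSup₂_le fun _ hj => le_biSup m (ne_of_lt hj)

theorem measurable_update_of_measurable_of_ne {Ω ι β : Type*} [DecidableEq ι]
    [m : MeasurableSpace Ω] [MeasurableSpace β] {X : ι → Ω → β} {k : ι}
    (hX : ∀ j ≠ k, Measurable (X j)) (b : β) :
    Measurable fun ω => Function.update (fun j => X j ω) k b := by
  refine measurable_pi_lambda _ fun j => ?_
  rcases eq_or_ne j k with rfl | hj
  · simp [measurable_const]
  · simpa [hj] using hX j hj

theorem stmt_4_general {Ω : Type*} [MeasurableSpace Ω] (μ : Measure Ω) [IsProbabilityMeasure μ]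
    (n M : ℕ) (T : ℝ)
    (X : Fin n → Ω → ℂ) (hmeas : ∀ j, Measurable (X j))
    (hiid : ProbabilityTheory.iIndepFun X μ)
    (hdist : ∀ j, Measure.map (X j) μ = pskMeasure M)
    (F : ℕ → MeasurableSpace Ω)
    (hF : ∀ i, F i = ⨆ j : Fin n, ⨆ _ : (j : ℕ) < i, MeasurableSpace.comap (X j) inferInstance)
    (Y : ℕ → Ω → ℝ)
    (hY : ∀ i, Y i = μ[(fun ω => crest n T (fun j => X j ω)) | F i]) :
    ∀ i, 1 ≤ i → i ≤ n →
      ∀ᵐ ω ∂μ,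
        (μ[(fun ω' => (Y i ω' - Y (i - 1) ω') ^ 2) | F (i - 1)]) ω ≤ 2 / n := by
  intro i hi hin
  obtain ⟨k, rfl⟩ : ∃ k : Fin n, i = k + 1 := ⟨⟨i - 1, by omega⟩, by simp; omega⟩
  let mX : Fin n → MeasurableSpace Ω := fun j => MeasurableSpace.comap (X j) inferInstance
  have hmX : ∀ j, mX j ≤ ‹MeasurableSpace Ω› := fun j => (hmeas j).comap_le
  have hX : ∀ᵐ ω ∂μ, ∀ j, ‖X j ω‖ ≤ 1 := ae_all_iff.2 fun j =>
    (ae_of_ae_map (hmeas j).aemeasurable (hdist j ▸ ae_norm_eq_one_pskMeasure M)).mono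
      fun _ h => h.le
  have hW : Measurable[⨆ j ∈ ({k}ᶜ : Set (Fin n)), mX j]
      fun ω => Function.update (fun j => X j ω) k 0 :=
    measurable_update_of_measurable_of_ne (m := ⨆ j ∈ ({k}ᶜ : Set (Fin n)), mX j)
      (fun j hj => (comap_measurable (X j)).mono (le_biSup mX hj) le_rfl) 0
  have hZW : ∀ᵐ ω ∂μ, |crest n T (fun j => X j ω) -
      crest n T (Function.update (fun j => X j ω) k 0)| ≤ (Real.sqrt n)⁻¹ := by
    filter_upwards [hX] with ω h
    exact (abs_crest_sub_crest_update_le _ k).trans (mul_le_of_le_one_right (by positivity) (h k))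
  have hincr := condExp_sup_sub_condExp_sq_le (iSup₂_le fun j _ => hmX j)
    (iSup_lt_le_biSup_compl mX k) (hmX k)
    (ProbabilityTheory.indep_biSup_compl_singleton hmX hiid.iIndep k)
    (integrable_crest_comp (T := T) (measurable_pi_lambda _ hmeas) hX)
    ((lipschitzWith_crest (T := T)).continuous.measurable.comp hW).stronglyMeasurable hZW
  rw [hY, hY, hF, hF, Nat.add_sub_cancel, iSup_lt_succ_eq_sup]
  filter_upwards [hincr] with ω h
  calc _ ≤ (Real.sqrt n)⁻¹ ^ 2 := h
    _ ≤ 2 / n := by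
      rw [inv_pow, Real.sq_sqrt n.cast_nonneg, div_eq_mul_inv]
      linarith [inv_nonneg.2 (n.cast_nonneg : (0 : ℝ) ≤ n)]

theorem stmt_4 {Ω : Type*} [MeasurableSpace Ω] (μ : Measure Ω) [IsProbabilityMeasure μ]
    (n M : ℕ) (hn : 0 < n) (hM : 2 ≤ M) (T : ℝ) (hT : 0 < T)
    (X : Fin n → Ω → ℂ) (hmeas : ∀ j, Measurable (X j))
    (hiid : ProbabilityTheory.iIndepFun X μ)
    (hdist : ∀ j, Measure.map (X j) μ = pskMeasure M)
    (F : ℕ → MeasurableSpace Ω)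
    (hF : ∀ i, F i = ⨆ j : Fin n, ⨆ _ : (j : ℕ) < i, MeasurableSpace.comap (X j) inferInstance)
    (Y : ℕ → Ω → ℝ)
    (hY : ∀ i, Y i = μ[(fun ω => crest n T (fun j => X j ω)) | F i]) :
    ∀ i, 1 ≤ i → i ≤ n →
      ∀ᵐ ω ∂μ,
        (μ[(fun ω' => (Y i ω' - Y (i - 1) ω') ^ 2) | F (i - 1)]) ω ≤ 2 / n :=
  stmt_4_general μ n M T X hmeas hiid hdist F hF Y hY
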